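/- arXiv:2202.10951 — 3 statements merged into one kernel-verified Lean document; each statement's English description precedes it below -/
import Mathlib

section
/- MISELBO with L=1 is at least the average of standard ELBOs: (1/S)∑_s E_{z∼q_s}[log( p(x,z) / ((1/S)∑_j q_j(z)) )] ≥ (1/S)∑_s E_{z∼q_s}[log( p(x,z)/q_s(z) )], and the difference lies in the interval [0, log S]. -/
open MeasureTheory Real
open scoped BigOperators

/-!
Write `m = (1/S) ∑ⱼ qⱼ` for the uniform mixture. Wherever `q s z ≠ 0` both `p z` and `m z` are
nonzero, so the `s`-th summand of the gap is `∫ q s log (q s / m)`, the relative entropy of `q s`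
with respect to the probability density `m`. It is nonnegative by Gibbs' inequality
`x - y ≤ x log (x / y)` (both densities integrate to `1`), and it is at most `log S` because
`q s ≤ S m` pointwise.
-/

namespace Real

theorem sub_le_mul_log_div {x y : ℝ} (hx : 0 < x) (hy : 0 < y) : x - y ≤ x * log (x / y) := by
  have h := one_sub_inv_le_log_of_pos (div_pos hx hy)
  calc x - y = x * (1 - (x / y)⁻¹) := by field_simp
    _ ≤ x * log (x / y) := mul_le_mul_of_nonneg_left h hx.le

theorem mul_log_div_sub_mul_log_div {a b x : ℝ} (ha : x ≠ 0 → a ≠ 0) (hb : x ≠ 0 → b ≠ 0) :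
    x * log (a / b) - x * log (a / x) = x * log (x / b) := by
  rcases eq_or_ne x 0 with rfl | hx
  · simp
  · rw [log_div (ha hx) (hb hx), log_div (ha hx) hx, log_div hx (hb hx)]
    ring

end Real

theorem ne_zero_of_pos_of_le_mul {x y c : ℝ} (hx : 0 < x) (h : x ≤ c * y) : y ≠ 0 :=
  right_ne_zero_of_mul (hx.trans_le h).ne'

section RelativeEntropy

variable {α : Type*} [MeasurableSpace α] {μ : Measure α} {q m : α → ℝ} {c : ℝ}

theorem integral_mul_log_div_nonneg (hq : ∀ z, 0 ≤ q z) (hm : ∀ z, 0 ≤ m z)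
    (hqm : ∀ z, q z ≤ c * m z) (hq1 : ∫ z, q z ∂μ = 1) (hm1 : ∫ z, m z ∂μ = 1)
    (hint : Integrable (fun z => q z * log (q z / m z)) μ) :
    0 ≤ ∫ z, q z * log (q z / m z) ∂μ := by
  have hq_int : Integrable q μ := .of_integral_ne_zero (by simp [hq1])
  have hm_int : Integrable m μ := .of_integral_ne_zero (by simp [hm1])
  have gibbs : ∀ z, q z - m z ≤ q z * log (q z / m z) := by
    intro z
    rcases (hq z).eq_or_lt with hqz | hqz
    · simp [← hqz, hm z]
    · have hmz : 0 < m z := (hm z).lt_of_ne' (ne_zero_of_pos_of_le_mul hqz (hqm z))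
      exact sub_le_mul_log_div hqz hmz
  calc (0 : ℝ) = ∫ z, (q z - m z) ∂μ := by rw [integral_sub hq_int hm_int, hq1, hm1, sub_self]
    _ ≤ ∫ z, q z * log (q z / m z) ∂μ := integral_mono (hq_int.sub hm_int) hint gibbs

theorem integral_mul_log_div_le_log (hq : ∀ z, 0 ≤ q z) (hm : ∀ z, 0 ≤ m z)
    (hqm : ∀ z, q z ≤ c * m z) (hq1 : ∫ z, q z ∂μ = 1)
    (hint : Integrable (fun z => q z * log (q z / m z)) μ) :
    ∫ z, q z * log (q z / m z) ∂μ ≤ log c := by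
  have hq_int : Integrable q μ := .of_integral_ne_zero (by simp [hq1])
  have pointwise : ∀ z, q z * log (q z / m z) ≤ q z * log c := by
    intro z
    rcases (hq z).eq_or_lt with hqz | hqz
    · simp [← hqz]
    · have hmz : 0 < m z := (hm z).lt_of_ne' (ne_zero_of_pos_of_le_mul hqz (hqm z))
      have hlog : log (q z / m z) ≤ log c :=
        log_le_log (div_pos hqz hmz) ((div_le_iff₀ hmz).mpr (hqm z))
      exact mul_le_mul_of_nonneg_left hlog hqz.le
  calc ∫ z, q z * log (q z / m z) ∂μ ≤ ∫ z, q z * log c ∂μ :=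
        integral_mono hint (hq_int.mul_const _) pointwise
    _ = log c := by rw [integral_mul_const, hq1, one_mul]

theorem integral_mul_log_div_sub_mem_Icc {p : α → ℝ} (hq : ∀ z, 0 ≤ q z) (hm : ∀ z, 0 ≤ m z)
    (hqm : ∀ z, q z ≤ c * m z) (hq1 : ∫ z, q z ∂μ = 1) (hm1 : ∫ z, m z ∂μ = 1)
    (hqp : ∀ z, p z = 0 → q z = 0) (hpm : Integrable (fun z => q z * log (p z / m z)) μ)
    (hpq : Integrable (fun z => q z * log (p z / q z)) μ) :
    ∫ z, q z * log (p z / m z) ∂μ - ∫ z, q z * log (p z / q z) ∂μ ∈ Set.Icc 0 (log c) := by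
  have pointwise : ∀ z, q z * log (p z / m z) - q z * log (p z / q z) = q z * log (q z / m z) :=
    fun z => mul_log_div_sub_mul_log_div (mt (hqp z))
      fun hqz => ne_zero_of_pos_of_le_mul ((hq z).lt_of_ne' hqz) (hqm z)
  have hint : Integrable (fun z => q z * log (q z / m z)) μ :=
    (hpm.sub hpq).congr (.of_forall pointwise)
  rw [← integral_sub hpm hpq, integral_congr_ae (.of_forall pointwise)]
  exact ⟨integral_mul_log_div_nonneg hq hm hqm hq1 hm1 hint,
    integral_mul_log_div_le_log hq hm hqm hq1 hint⟩

end RelativeEntropy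

section UniformMixture

variable {ι α : Type*} [Fintype ι] {q : ι → α → ℝ}

theorem uniform_mixture_nonneg (hq : ∀ j z, 0 ≤ q j z) (z : α) :
    0 ≤ (1 / (Fintype.card ι : ℝ)) * ∑ j, q j z :=
  mul_nonneg (by positivity) (Finset.sum_nonneg fun j _ => hq j z)

theorem le_card_mul_uniform_mixture (hq : ∀ j z, 0 ≤ q j z) (i : ι) (z : α) :
    q i z ≤ Fintype.card ι * ((1 / (Fintype.card ι : ℝ)) * ∑ j, q j z) := by
  have : Nonempty ι := ⟨i⟩
  rw [← mul_assoc, mul_one_div_cancel (by positivity), one_mul]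
  exact Finset.single_le_sum (fun j _ => hq j z) (Finset.mem_univ i)

theorem integral_uniform_mixture [Nonempty ι] [MeasurableSpace α] {μ : Measure α}
    (hq1 : ∀ j, ∫ z, q j z ∂μ = 1) :
    ∫ z, (1 / (Fintype.card ι : ℝ)) * ∑ j, q j z ∂μ = 1 := by
  have hq_int : ∀ j, Integrable (q j) μ := fun j => .of_integral_ne_zero (by simp [hq1 j])
  rw [integral_const_mul, integral_finsetSum _ fun j _ => hq_int j]
  simp [hq1]

end UniformMixture

theorem one_div_card_mul_sum_mem_Icc {ι : Type*} [Fintype ι] [Nonempty ι] {f : ι → ℝ} {a b : ℝ}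
    (hf : ∀ i, f i ∈ Set.Icc a b) : (1 / (Fintype.card ι : ℝ)) * ∑ i, f i ∈ Set.Icc a b := by
  rw [one_div_mul_eq_div, ← Fintype.expect_eq_sum_div_card]
  exact ⟨Finset.le_expect Finset.univ_nonempty fun i _ => (hf i).1,
    Finset.expect_le Finset.univ_nonempty fun i _ => (hf i).2⟩

theorem miselbo_ge_avg_elbo_general
    {α : Type*} [MeasurableSpace α] (μ : Measure α)
    (S : ℕ) (hS : 0 < S) (q : Fin S → α → ℝ) (p : α → ℝ)
    (hq_nonneg : ∀ s z, 0 ≤ q s z)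
    (hq_prob : ∀ s, ∫ z, q s z ∂μ = 1)
    -- each `q s` is absolutely continuous w.r.t. the posterior `p(z|x) ∝ p(x,z)`
    (hq_ac : ∀ s z, p z = 0 → q s z = 0)
    (h_int_mis : ∀ s, Integrable
      (fun z => q s z * Real.log (p z / ((1 / (S : ℝ)) * ∑ j, q j z))) μ)
    (h_int_elbo : ∀ s, Integrable (fun z => q s z * Real.log (p z / q s z)) μ) :
    (1 / (S : ℝ)) * ∑ s, ∫ z, q s z * Real.log (p z / ((1 / (S : ℝ)) * ∑ j, q j z)) ∂μ
      ≥ (1 / (S : ℝ)) * ∑ s, ∫ z, q s z * Real.log (p z / q s z) ∂μ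
    ∧ (1 / (S : ℝ)) * ∑ s, ∫ z, q s z * Real.log (p z / ((1 / (S : ℝ)) * ∑ j, q j z)) ∂μ
        - (1 / (S : ℝ)) * ∑ s, ∫ z, q s z * Real.log (p z / q s z) ∂μ ∈
        Set.Icc (0 : ℝ) (Real.log S) := by
  have : Nonempty (Fin S) := ⟨⟨0, hS⟩⟩
  set m : α → ℝ := fun z => (1 / (S : ℝ)) * ∑ j, q j z
  have hm_nonneg : ∀ z, 0 ≤ m z := by
    simpa only [Fintype.card_fin] using uniform_mixture_nonneg hq_nonneg
  have hqm : ∀ s z, q s z ≤ S * m z := by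
    simpa only [Fintype.card_fin] using le_card_mul_uniform_mixture hq_nonneg
  have hm1 : ∫ z, m z ∂μ = 1 := by
    simpa only [Fintype.card_fin] using integral_uniform_mixture (μ := μ) hq_prob
  have hgap := one_div_card_mul_sum_mem_Icc fun s =>
    integral_mul_log_div_sub_mem_Icc (hq_nonneg s) hm_nonneg (hqm s) (hq_prob s) hm1 (hq_ac s)
      (h_int_mis s) (h_int_elbo s)
  rw [Fintype.card_fin, Finset.sum_sub_distrib, mul_sub] at hgap
  exact ⟨sub_nonneg.mp hgap.1, hgap⟩

/-- MISELBO with `L = 1` is at least the average of standard ELBOs, and the gap lies in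
`[0, log S]`. -/
theorem miselbo_ge_avg_elbo
    {α : Type*} [MeasurableSpace α] (μ : Measure α)
    (S : ℕ) (hS : 0 < S) (q : Fin S → α → ℝ) (p : α → ℝ)
    (hq_meas : ∀ s, Measurable (q s))
    (hq_nonneg : ∀ s z, 0 ≤ q s z)
    (hq_prob : ∀ s, ∫ z, q s z ∂μ = 1)
    (hp_meas : Measurable p) (hp_nonneg : ∀ z, 0 ≤ p z)
    -- each `q s` is absolutely continuous w.r.t. the posterior `p(z|x) ∝ p(x,z)`
    (hq_ac : ∀ s z, p z = 0 → q s z = 0)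
    (h_int_mis : ∀ s, Integrable
      (fun z => q s z * Real.log (p z / ((1 / (S : ℝ)) * ∑ j, q j z))) μ)
    (h_int_elbo : ∀ s, Integrable (fun z => q s z * Real.log (p z / q s z)) μ) :
    (1 / (S : ℝ)) * ∑ s, ∫ z, q s z * Real.log (p z / ((1 / (S : ℝ)) * ∑ j, q j z)) ∂μ
      ≥ (1 / (S : ℝ)) * ∑ s, ∫ z, q s z * Real.log (p z / q s z) ∂μ
    ∧ (1 / (S : ℝ)) * ∑ s, ∫ z, q s z * Real.log (p z / ((1 / (S : ℝ)) * ∑ j, q j z)) ∂μ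
        - (1 / (S : ℝ)) * ∑ s, ∫ z, q s z * Real.log (p z / q s z) ∂μ ∈
        Set.Icc (0 : ℝ) (Real.log S) :=
  miselbo_ge_avg_elbo_general μ S hS q p hq_nonneg hq_prob hq_ac h_int_mis h_int_elbo
end

section
/- For any number of importance samples L, the MISELBO 𝓛^L_MIS = (1/S)∑_s E_{z_{s,1},...,z_{s,L} iid ∼ q_s}[ log( (1/L)∑_ℓ p(x, z_{s,ℓ}) / ((1/S)∑_j q_j(z_{s,ℓ})) ) ] is a lower bound on the marginal log-likelihood: log p(x) ≥ 𝓛^L_MIS, where p(x) = ∫ p(x,z) dμ(z). -/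
open MeasureTheory Real
open scoped BigOperators

/-- For any number of importance samples `L`, the MISELBO is a lower bound on the marginal
log-likelihood `log p(x)`. -/
theorem log_marginal_ge_miselbo
    {α : Type*} [MeasurableSpace α] (μ : Measure α) [SigmaFinite μ]
    (S L : ℕ) (hS : 0 < S) (hL : 0 < L)
    (q : Fin S → α → ℝ) (p : α → ℝ)
    (hq_meas : ∀ s, Measurable (q s))
    (hq_nonneg : ∀ s z, 0 ≤ q s z)
    (hq_prob : ∀ s, ∫ z, q s z ∂μ = 1)
    (hp_meas : Measurable p) (hp_nonneg : ∀ z, 0 ≤ p z)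
    (hp_int : Integrable p μ)
    (hp_pos : 0 < ∫ z, p z ∂μ)
    -- each `q s` is absolutely continuous w.r.t. the posterior `p(z|x) ∝ p(x,z)`
    (hq_ac : ∀ s z, p z = 0 → q s z = 0)
    (h_int : ∀ s, Integrable
      (fun zs : Fin L → α => (∏ ℓ, q s (zs ℓ)) *
        Real.log ((1 / (L : ℝ)) * ∑ ℓ, p (zs ℓ) / ((1 / (S : ℝ)) * ∑ j, q j (zs ℓ))))
      (Measure.pi fun _ : Fin L => μ)) :
    Real.log (∫ z, p z ∂μ)
      ≥ (1 / (S : ℝ)) * ∑ s, ∫ zs : Fin L → α,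
          (∏ ℓ, q s (zs ℓ)) *
            Real.log ((1 / (L : ℝ)) * ∑ ℓ, p (zs ℓ) / ((1 / (S : ℝ)) * ∑ j, q j (zs ℓ)))
          ∂(Measure.pi fun _ : Fin L => μ) := by
  letI : MeasureSpace α := ⟨μ⟩
  haveI : SigmaFinite (volume : Measure α) := ‹SigmaFinite μ›
  haveI : Nonempty (Fin L) := ⟨⟨0, hL⟩⟩
  set P : ℝ := ∫ z, p z ∂μ with hPdef
  have hS' : (0:ℝ) < S := by exact_mod_cast hS
  have hL' : (0:ℝ) < L := by exact_mod_cast hL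
  set Q : α → ℝ := fun z => (1 / (S : ℝ)) * ∑ j, q j z with hQdef
  set r : α → ℝ := fun z => p z / Q z with hrdef
  have hQ_nonneg : ∀ z, 0 ≤ Q z := fun z =>
    mul_nonneg (by positivity) (Finset.sum_nonneg fun j _ => hq_nonneg j z)
  have hQ_meas : Measurable Q :=
    (Finset.measurable_sum Finset.univ (fun j _ => hq_meas j)).const_mul _
  have hr_nonneg : ∀ z, 0 ≤ r z := fun z => div_nonneg (hp_nonneg z) (hQ_nonneg z)
  have hr_meas : Measurable r := hp_meas.div hQ_meas
  have hqQ : ∀ s z, q s z ≤ (S:ℝ) * Q z := by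
    intro s z
    have h1 : q s z ≤ ∑ j, q j z :=
      Finset.single_le_sum (fun j _ => hq_nonneg j z) (Finset.mem_univ s)
    have h2 : (S:ℝ) * Q z = ∑ j, q j z := by
      rw [hQdef]; field_simp
    linarith
  have hr_pos : ∀ s z, 0 < q s z → 0 < r z := by
    intro s z hq
    have hp : 0 < p z := by
      rcases (hp_nonneg z).lt_or_eq with h | h
      · exact h
      · exfalso; rw [hq_ac s z h.symm] at hq; exact lt_irrefl 0 hq
    have hQ : 0 < Q z := by nlinarith [hqQ s z]
    exact div_pos hp hQ
  have hq_int : ∀ s, Integrable (q s) μ := by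
    intro s
    by_contra h
    have := hq_prob s
    rw [integral_undef h] at this
    norm_num at this
  set g : Fin S → α → ℝ := fun s z => q s z * r z with hgdef
  have hg_nonneg : ∀ s z, 0 ≤ g s z := fun s z => mul_nonneg (hq_nonneg s z) (hr_nonneg z)
  have hg_meas : ∀ s, Measurable (g s) := fun s => (hq_meas s).mul hr_meas
  have hg_le : ∀ s z, g s z ≤ (S:ℝ) * p z := by
    intro s z
    rcases (hQ_nonneg z).lt_or_eq with h | h
    · have : g s z = q s z * (p z / Q z) := rfl
      rw [this]
      calc q s z * (p z / Q z) ≤ ((S:ℝ) * Q z) * (p z / Q z) :=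
            mul_le_mul_of_nonneg_right (hqQ s z) (hr_nonneg z)
        _ = (S:ℝ) * p z := by field_simp
    · have hq0 : q s z = 0 := by
        have := hqQ s z
        rw [← h] at this
        simp at this
        exact le_antisymm this (hq_nonneg s z)
      have : g s z = 0 := by simp [hgdef, hq0]
      rw [this]
      exact mul_nonneg (by positivity) (hp_nonneg z)
  have hg_int : ∀ s, Integrable (g s) μ := by
    intro s
    apply Integrable.mono' (hp_int.const_mul (S:ℝ)) ((hg_meas s).aestronglyMeasurable)
    filter_upwards with z
    rw [Real.norm_eq_abs, abs_of_nonneg (hg_nonneg s z)]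
    exact hg_le s z
  set A : Fin S → ℝ := fun s => ∫ z, g s z ∂μ with hAdef
  have hA_nonneg : ∀ s, 0 ≤ A s := fun s => integral_nonneg (fun z => hg_nonneg s z)
  have hA_pos : ∀ s, 0 < A s := by
    intro s
    rcases (hA_nonneg s).lt_or_eq with h | h
    · exact h
    · exfalso
      have h0 : g s =ᵐ[μ] 0 :=
        (integral_eq_zero_iff_of_nonneg (fun z => hg_nonneg s z) (hg_int s)).1 h.symm
      have hq0 : q s =ᵐ[μ] fun _ => (0:ℝ) := by
        filter_upwards [h0] with z hz
        by_contra hne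
        have hqp : 0 < q s z := (hq_nonneg s z).lt_of_ne (Ne.symm hne)
        have hpos := mul_pos hqp (hr_pos s z hqp)
        exact ne_of_gt hpos hz
      have h1 := hq_prob s
      rw [integral_congr_ae hq0] at h1
      simp at h1
  -- the average of the `A s` is at most `P`
  have hsum_le : (1/(S:ℝ)) * ∑ s, A s ≤ P := by
    have h1 : ∑ s, A s = ∫ z, ∑ s, g s z ∂μ :=
      (integral_finset_sum _ (fun s _ => hg_int s)).symm
    have h2 : ∀ z, (1/(S:ℝ)) * ∑ s, g s z ≤ p z := by
      intro z
      have he : (1/(S:ℝ)) * ∑ s, g s z = Q z * r z := by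
        simp only [hgdef, ← Finset.sum_mul]
        rw [hQdef]
        ring
      rcases (hQ_nonneg z).lt_or_eq with h | h
      · rw [he, hrdef]
        have : Q z * (p z / Q z) = p z := by field_simp
        rw [this]
      · rw [he, ← h]
        simpa using hp_nonneg z
    calc (1/(S:ℝ)) * ∑ s, A s = ∫ z, (1/(S:ℝ)) * ∑ s, g s z ∂μ := by
          rw [h1, integral_const_mul]
      _ ≤ ∫ z, p z ∂μ := by
          apply integral_mono ((integrable_finset_sum _ (fun s _ => hg_int s)).const_mul _)
            hp_int h2
      _ = P := rfl
  -- Jensen step for each s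
  have key : ∀ s, (∫ zs : Fin L → α,
      (∏ ℓ, q s (zs ℓ)) *
        Real.log ((1 / (L : ℝ)) * ∑ ℓ, p (zs ℓ) / ((1 / (S : ℝ)) * ∑ j, q j (zs ℓ)))
      ∂(Measure.pi fun _ : Fin L => μ)) ≤ Real.log (A s) := by
    intro s
    set pm : Measure (Fin L → α) := Measure.pi fun _ : Fin L => μ with hpmdef
    set G : (Fin L → α) → ℝ := fun zs => ∏ ℓ, q s (zs ℓ) with hGdef
    set F : (Fin L → α) → ℝ := fun zs => (1/(L:ℝ)) * ∑ ℓ, r (zs ℓ) with hFdef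
    have hshow : (fun zs : Fin L → α => (∏ ℓ, q s (zs ℓ)) *
        Real.log ((1 / (L : ℝ)) * ∑ ℓ, p (zs ℓ) / ((1 / (S : ℝ)) * ∑ j, q j (zs ℓ))))
        = fun zs => G zs * Real.log (F zs) := rfl
    set c : ℝ := A s with hcdef
    have hc : 0 < c := hA_pos s
    have hG_nonneg : ∀ zs, 0 ≤ G zs := fun zs =>
      Finset.prod_nonneg (fun ℓ _ => hq_nonneg s (zs ℓ))
    have hG_int : Integrable G pm :=
      Integrable.fintype_prod (f := fun _ : Fin L => q s) (fun _ => hq_int s)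
    have hG_integral : ∫ zs, G zs ∂pm = 1 := by
      show ∫ zs : Fin L → α, ∏ ℓ, q s (zs ℓ) ∂pm = 1
      rw [show pm = (volume : Measure (Fin L → α)) from rfl]
      erw [integral_fintype_prod_eq_pow (ι := Fin L) (μ := (volume : Measure α)) (q s)]
      rw [show (∫ z, q s z) = 1 from hq_prob s, one_pow]
    -- per-ℓ product form
    have hterm : ∀ ℓ : Fin L, ∀ zs : Fin L → α,
        G zs * r (zs ℓ) = ∏ m, (q s (zs m) * if m = ℓ then r (zs m) else 1) := by
      intro ℓ zs
      rw [Finset.prod_mul_distrib]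
      congr 1
      rw [Finset.prod_ite_eq' Finset.univ ℓ (fun m => r (zs m))]
      simp
    have hterm_int : ∀ ℓ : Fin L, Integrable
        (fun zs : Fin L → α => ∏ m, (q s (zs m) * if m = ℓ then r (zs m) else 1)) pm := by
      intro ℓ
      apply Integrable.fintype_prod (f := fun m z => q s z * if m = ℓ then r z else 1)
      intro m
      by_cases h : m = ℓ
      · simpa [h] using hg_int s
      · simpa [h] using hq_int s
    have hGF_eq : (fun zs => G zs * F zs) = fun zs : Fin L → α =>
        (1/(L:ℝ)) * ∑ ℓ, ∏ m, (q s (zs m) * if m = ℓ then r (zs m) else 1) := by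
      funext zs
      calc G zs * F zs = (1/(L:ℝ)) * ∑ ℓ, G zs * r (zs ℓ) := by
            simp only [hFdef]
            rw [mul_left_comm, Finset.mul_sum]
        _ = (1/(L:ℝ)) * ∑ ℓ, ∏ m, (q s (zs m) * if m = ℓ then r (zs m) else 1) := by
            rw [Finset.sum_congr rfl (fun ℓ _ => hterm ℓ zs)]
    have hGF_int : Integrable (fun zs => G zs * F zs) pm := by
      rw [hGF_eq]
      exact (integrable_finset_sum _ (fun ℓ _ => hterm_int ℓ)).const_mul _
    have hGF_integral : ∫ zs, G zs * F zs ∂pm = c := by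
      rw [hGF_eq, integral_const_mul, integral_finset_sum _ (fun ℓ _ => hterm_int ℓ)]
      have hone : ∀ ℓ : Fin L, ∫ zs : Fin L → α,
          (∏ m, (q s (zs m) * if m = ℓ then r (zs m) else 1)) ∂pm = c := by
        intro ℓ
        rw [show pm = (volume : Measure (Fin L → α)) from rfl]
        erw [integral_fintype_prod_eq_prod (ι := Fin L) (fun m z => q s z * if m = ℓ then r z else 1) (μ := fun _ => (volume : Measure α))]
        have : ∀ m : Fin L, (∫ z, q s z * if m = ℓ then r z else 1) =
            if m = ℓ then c else 1 := by
          intro m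
          by_cases h : m = ℓ
          · simp only [h, if_true]
            rfl
          · simp only [h, if_false]
            simp only [mul_one]
            exact hq_prob s
        rw [Finset.prod_congr rfl (fun m _ => this m)]
        rw [Finset.prod_ite_eq' Finset.univ ℓ (fun _ => c)]
        simp
      rw [Finset.sum_congr rfl (fun ℓ _ => hone ℓ)]
      simp
      field_simp
    -- pointwise tangent-line bound
    have hpt : ∀ zs : Fin L → α,
        G zs * Real.log (F zs) ≤ (G zs * F zs) / c + (Real.log c - 1) * G zs := by
      intro zs
      rcases (hG_nonneg zs).lt_or_eq with hG | hG
      · have hfac : ∀ ℓ, 0 < q s (zs ℓ) := by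
          intro ℓ
          rcases (hq_nonneg s (zs ℓ)).lt_or_eq with h | h
          · exact h
          · exfalso
            have : G zs = 0 := Finset.prod_eq_zero (Finset.mem_univ ℓ) h.symm
            rw [this] at hG
            exact lt_irrefl 0 hG
        have hF : 0 < F zs := by
          apply mul_pos (by positivity)
          exact Finset.sum_pos (fun ℓ _ => hr_pos s (zs ℓ) (hfac ℓ)) Finset.univ_nonempty
        have hlog : Real.log (F zs) ≤ F zs / c + (Real.log c - 1) := by
          have h1 := Real.log_le_sub_one_of_pos (div_pos hF hc)
          rw [Real.log_div hF.ne' hc.ne'] at h1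
          linarith
        have := mul_le_mul_of_nonneg_left hlog hG.le
        calc G zs * Real.log (F zs) ≤ G zs * (F zs / c + (Real.log c - 1)) := this
          _ = (G zs * F zs) / c + (Real.log c - 1) * G zs := by ring
      · rw [← hG]
        simp
    -- integrate
    rw [hshow]
    calc (∫ zs, G zs * Real.log (F zs) ∂pm)
        ≤ ∫ zs, ((G zs * F zs) / c + (Real.log c - 1) * G zs) ∂pm := by
          apply integral_mono (h_int s) _ hpt
          exact (hGF_int.div_const c).add (hG_int.const_mul _)
      _ = (∫ zs, G zs * F zs ∂pm) / c + (Real.log c - 1) * ∫ zs, G zs ∂pm := by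
          rw [integral_add (hGF_int.div_const c) (hG_int.const_mul _),
            integral_div, integral_const_mul]
      _ = Real.log c := by
          rw [hGF_integral, hG_integral]
          field_simp
          ring
  -- assemble
  rw [ge_iff_le]
  have hlogA : ∀ s, Real.log (A s) ≤ Real.log P - 1 + A s / P := by
    intro s
    have h1 := Real.log_le_sub_one_of_pos (div_pos (hA_pos s) hp_pos)
    rw [Real.log_div (hA_pos s).ne' hp_pos.ne'] at h1
    linarith
  have h1 : ∑ s, (∫ zs : Fin L → α,
      (∏ ℓ, q s (zs ℓ)) *
        Real.log ((1 / (L : ℝ)) * ∑ ℓ, p (zs ℓ) / ((1 / (S : ℝ)) * ∑ j, q j (zs ℓ)))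
      ∂(Measure.pi fun _ : Fin L => μ)) ≤ ∑ s, (Real.log P - 1 + A s / P) :=
    Finset.sum_le_sum (fun s _ => (key s).trans (hlogA s))
  have h2 : ∑ s : Fin S, (Real.log P - 1 + A s / P)
      = (S:ℝ) * (Real.log P - 1) + (∑ s, A s) / P := by
    rw [Finset.sum_add_distrib, Finset.sum_const, ← Finset.sum_div]
    simp [nsmul_eq_mul]
  have h3 : (∑ s, A s) ≤ (S:ℝ) * P := by
    have := hsum_le
    rw [div_mul_eq_mul_div, one_mul, div_le_iff₀ hS'] at this
    linarith [this]
  have h4 : (∑ s, A s) / P ≤ (S:ℝ) := by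
    rw [div_le_iff₀ hp_pos]
    linarith
  calc (1 / (S : ℝ)) * ∑ s, (∫ zs : Fin L → α,
      (∏ ℓ, q s (zs ℓ)) *
        Real.log ((1 / (L : ℝ)) * ∑ ℓ, p (zs ℓ) / ((1 / (S : ℝ)) * ∑ j, q j (zs ℓ)))
      ∂(Measure.pi fun _ : Fin L => μ))
      ≤ (1 / (S : ℝ)) * ((S:ℝ) * (Real.log P - 1) + (∑ s, A s) / P) := by
        apply mul_le_mul_of_nonneg_left _ (by positivity)
        rw [← h2]; exact h1
    _ ≤ (1 / (S : ℝ)) * ((S:ℝ) * (Real.log P - 1) + (S:ℝ)) := by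
        apply mul_le_mul_of_nonneg_left _ (by positivity)
        linarith
    _ = Real.log P := by field_simp; ring
end

section
/- The importance weighted ELBO using the equal-weight mixture proposal q̄ = (1/S)∑_s q_s is monotonically non-decreasing in the number of importance samples: for all L ≥ 1, 𝓛^{L+1} ≥ 𝓛^L, where 𝓛^L = E_{z_1,...,z_L iid ∼ q̄}[ log( (1/L)∑_ℓ p(x, z_ℓ)/q̄(z_ℓ) ) ]. -/
/-! Averaging the `L + 1` leave-one-out `L`-sample estimators recovers the `(L + 1)`-sample
estimator, and each leave-one-out term has the law of the `L`-sample estimator. Jensen's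
inequality for the concave `log` then bounds the average of the logs of the leave-one-out
estimators by the log of the `(L + 1)`-sample estimator, pointwise in the samples; integrating
gives `𝓛^L ≤ 𝓛^{L+1}`. -/

open MeasureTheory Real
open scoped BigOperators

/-- The importance weighted ELBO with proposal `q` and joint density `p(x, ·)`, using `L`
i.i.d. importance samples. -/
noncomputable def iwelbo {α : Type*} [MeasurableSpace α] (μ : Measure α)
    (q p : α → ℝ) (L : ℕ) : ℝ :=
  ∫ zs : Fin L → α,
    (∏ ℓ, q (zs ℓ)) * Real.log ((1 / (L : ℝ)) * ∑ ℓ, p (zs ℓ) / q (zs ℓ))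
    ∂(Measure.pi fun _ : Fin L => μ)

theorem Fin.sum_sum_succAbove {M : Type*} [AddCommGroup M] (n : ℕ) (w : Fin (n + 1) → M) :
    ∑ k : Fin (n + 1), ∑ j : Fin n, w (k.succAbove j) = n • ∑ i, w i := by
  have hloo : ∀ k, ∑ j : Fin n, w (k.succAbove j) = ∑ i, w i - w k := fun k =>
    eq_sub_of_add_eq' (Fin.sum_univ_succAbove w k).symm
  simp only [hloo, Finset.sum_sub_distrib, Finset.sum_const, Finset.card_univ, Fintype.card_fin,
    succ_nsmul, add_sub_cancel_right]

theorem Real.mean_log_mean_succAbove_le_log_mean {n : ℕ} (hn : n ≠ 0) {w : Fin (n + 1) → ℝ}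
    (hw : ∀ i, 0 < w i) :
    (1 / (n + 1 : ℝ)) * ∑ k : Fin (n + 1), log ((1 / n : ℝ) * ∑ j : Fin n, w (k.succAbove j))
      ≤ log ((1 / (n + 1 : ℝ)) * ∑ i, w i) := by
  have hmean_pos : ∀ k : Fin (n + 1), 0 < (1 / n : ℝ) * ∑ j : Fin n, w (k.succAbove j) :=
    fun k => mul_pos (by positivity) <| Finset.sum_pos (fun j _ => hw _) <|
      Finset.univ_nonempty_iff.2 (Fin.pos_iff_nonempty.1 (Nat.pos_of_ne_zero hn))
  have hweights : ∑ _k : Fin (n + 1), (1 / (n + 1 : ℝ)) = 1 := by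
    simp only [Finset.sum_const, Finset.card_univ, Fintype.card_fin, nsmul_eq_mul]
    push_cast
    field_simp
  have hjensen := strictConcaveOn_log_Ioi.concaveOn.le_map_sum (t := Finset.univ)
    (fun _ _ => by positivity) hweights (fun k _ => hmean_pos k)
  have hmean_mean : ∑ k : Fin (n + 1), (1 / (n + 1 : ℝ)) • ((1 / n : ℝ) *
      ∑ j : Fin n, w (k.succAbove j)) = (1 / (n + 1 : ℝ)) * ∑ i, w i := by
    simp only [smul_eq_mul, ← Finset.mul_sum, Fin.sum_sum_succAbove, nsmul_eq_mul]
    field_simp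
  rw [hmean_mean] at hjensen
  simpa only [smul_eq_mul, ← Finset.mul_sum] using hjensen

section Marginal

variable {α : Type*} [MeasurableSpace α] {μ : Measure α} [SigmaFinite μ] {n : ℕ}

theorem integral_mul_comp_removeNth (f : α → ℝ) (g : (Fin n → α) → ℝ) (k : Fin (n + 1)) :
    ∫ zs, f (zs k) * g (k.removeNth zs) ∂(Measure.pi fun _ => μ)
      = (∫ z, f z ∂μ) * ∫ zs, g zs ∂(Measure.pi fun _ => μ) := by
  rw [← integral_prod_mul f g]
  exact (measurePreserving_piFinSuccAbove (fun _ => μ) k).integral_comp' (fun z => f z.1 * g z.2)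

theorem integrable_mul_comp_removeNth {f : α → ℝ} {g : (Fin n → α) → ℝ} (hf : Integrable f μ)
    (hg : Integrable g (Measure.pi fun _ => μ)) (k : Fin (n + 1)) :
    Integrable (fun zs => f (zs k) * g (k.removeNth zs)) (Measure.pi fun _ => μ) :=
  ((measurePreserving_piFinSuccAbove (fun _ => μ) k).integrable_comp_emb
    (MeasurableEquiv.piFinSuccAbove (fun _ => α) k).measurableEmbedding).2 (hf.mul_prod hg)

end Marginal

section Iwelbo

variable {α : Type*} {q p : α → ℝ} {L : ℕ}

noncomputable def iwelboIntegrand (q p : α → ℝ) (L : ℕ) (zs : Fin L → α) : ℝ :=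
  (∏ ℓ, q (zs ℓ)) * log ((1 / (L : ℝ)) * ∑ ℓ, p (zs ℓ) / q (zs ℓ))

theorem mul_iwelboIntegrand_removeNth (zs : Fin (L + 1) → α) (k : Fin (L + 1)) :
    q (zs k) * iwelboIntegrand q p L (k.removeNth zs)
      = (∏ ℓ, q (zs ℓ)) * log ((1 / (L : ℝ)) *
          ∑ j : Fin L, p (zs (k.succAbove j)) / q (zs (k.succAbove j))) := by
  rw [iwelboIntegrand, Fin.prod_univ_succAbove _ k, mul_assoc]
  rfl

theorem mean_mul_iwelboIntegrand_removeNth_le (hq : ∀ z, 0 ≤ q z)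
    (hsupp : ∀ z, 0 < q z → 0 < p z) (hL : L ≠ 0) (zs : Fin (L + 1) → α) :
    (1 / (L + 1 : ℝ)) * ∑ k, q (zs k) * iwelboIntegrand q p L (k.removeNth zs)
      ≤ iwelboIntegrand q p (L + 1) zs := by
  simp only [mul_iwelboIntegrand_removeNth]
  rw [← Finset.mul_sum, iwelboIntegrand, Nat.cast_succ, mul_left_comm]
  have hprod_nonneg : 0 ≤ ∏ ℓ, q (zs ℓ) := Finset.prod_nonneg fun ℓ _ => hq (zs ℓ)
  rcases hprod_nonneg.eq_or_lt with hzero | hpos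
  · simp [← hzero]
  have hq_pos : ∀ ℓ, 0 < q (zs ℓ) := fun ℓ =>
    (hq _).lt_of_ne fun h => hpos.ne' (Finset.prod_eq_zero (Finset.mem_univ ℓ) h.symm)
  have hlog := mean_log_mean_succAbove_le_log_mean hL
    fun ℓ => div_pos (hsupp _ (hq_pos ℓ)) (hq_pos ℓ)
  exact mul_le_mul_of_nonneg_left hlog hpos.le

theorem iwelbo_le_iwelbo_succ [MeasurableSpace α] {μ : Measure α} [SigmaFinite μ]
    (hq : ∀ z, 0 ≤ q z) (hq_prob : ∫ z, q z ∂μ = 1) (hsupp : ∀ z, 0 < q z → 0 < p z)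
    (hL : L ≠ 0) (hint : Integrable (iwelboIntegrand q p L) (Measure.pi fun _ => μ))
    (hint_succ : Integrable (iwelboIntegrand q p (L + 1)) (Measure.pi fun _ => μ)) :
    iwelbo μ q p L ≤ iwelbo μ q p (L + 1) := by
  have hq_int : Integrable q μ := .of_integral_ne_zero (by simp [hq_prob])
  have hloo_int (k : Fin (L + 1)) := integrable_mul_comp_removeNth hq_int hint k
  have hloo (k : Fin (L + 1)) :
      ∫ zs, q (zs k) * iwelboIntegrand q p L (k.removeNth zs) ∂(Measure.pi fun _ => μ)
        = iwelbo μ q p L := by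
    rw [integral_mul_comp_removeNth, hq_prob, one_mul]
    rfl
  calc iwelbo μ q p L
      = ∫ zs, (1 / (L + 1 : ℝ)) *
          ∑ k : Fin (L + 1), q (zs k) * iwelboIntegrand q p L (k.removeNth zs)
          ∂(Measure.pi fun _ => μ) := by
        rw [integral_const_mul, integral_finsetSum _ fun k _ => hloo_int k]
        simp only [hloo, Finset.sum_const, Finset.card_univ, Fintype.card_fin, nsmul_eq_mul,
          Nat.cast_succ]
        field_simp
    _ ≤ ∫ zs, iwelboIntegrand q p (L + 1) zs ∂(Measure.pi fun _ => μ) :=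
        integral_mono ((integrable_finsetSum _ fun k _ => hloo_int k).const_mul _) hint_succ
          (mean_mul_iwelboIntegrand_removeNth_le hq hsupp hL)
    _ = iwelbo μ q p (L + 1) := rfl

end Iwelbo

theorem integral_mixture_eq_one {α : Type*} [MeasurableSpace α] {μ : Measure α} {S : ℕ} (hS : 0 < S)
    {q : Fin S → α → ℝ} (hq_prob : ∀ s, ∫ z, q s z ∂μ = 1) :
    ∫ z, (1 / (S : ℝ)) * ∑ j, q j z ∂μ = 1 := by
  have hq_int : ∀ s, Integrable (q s) μ := fun s => .of_integral_ne_zero (by simp [hq_prob])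
  rw [integral_const_mul, integral_finsetSum _ fun j _ => hq_int j]
  simp only [hq_prob, Finset.sum_const, Finset.card_univ, Fintype.card_fin, nsmul_eq_mul, mul_one]
  field_simp

theorem iwelbo_mixture_monotone_general
    {α : Type*} [MeasurableSpace α] (μ : Measure α) [SigmaFinite μ]
    (S : ℕ) (hS : 0 < S) (q : Fin S → α → ℝ) (p : α → ℝ)
    (hq_nonneg : ∀ s z, 0 ≤ q s z)
    (hq_prob : ∀ s, ∫ z, q s z ∂μ = 1)
    (hp_nonneg : ∀ z, 0 ≤ p z)
    -- the support of the mixture is contained in the support of the posterior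
    (h_supp : ∀ z, p z = 0 → (1 / (S : ℝ)) * ∑ j, q j z = 0)
    (h_int : ∀ L : ℕ, Integrable
      (fun zs : Fin L → α =>
        (∏ ℓ, ((1 / (S : ℝ)) * ∑ j, q j (zs ℓ))) *
          Real.log ((1 / (L : ℝ)) * ∑ ℓ, p (zs ℓ) / ((1 / (S : ℝ)) * ∑ j, q j (zs ℓ))))
      (Measure.pi fun _ : Fin L => μ)) :
    ∀ L : ℕ, 1 ≤ L →
      iwelbo μ (fun z => (1 / (S : ℝ)) * ∑ j, q j z) p L
        ≤ iwelbo μ (fun z => (1 / (S : ℝ)) * ∑ j, q j z) p (L + 1) := by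
  intro L hL
  have hmix_nonneg : ∀ z, 0 ≤ (1 / (S : ℝ)) * ∑ j, q j z := fun z =>
    mul_nonneg (by positivity) (Finset.sum_nonneg fun j _ => hq_nonneg j z)
  have hmix_supp : ∀ z, 0 < (1 / (S : ℝ)) * ∑ j, q j z → 0 < p z := fun z hz =>
    (hp_nonneg z).lt_of_ne fun h => hz.ne' (h_supp z h.symm)
  exact iwelbo_le_iwelbo_succ hmix_nonneg (integral_mixture_eq_one hS hq_prob) hmix_supp
    (Nat.one_le_iff_ne_zero.1 hL) (h_int L) (h_int (L + 1))

/-- The importance weighted ELBO using the equal-weight mixture proposal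
`q̄ = (1/S) ∑ s, q s` is monotonically non-decreasing in the number of importance
samples: for all `L ≥ 1`, `𝓛^{L+1} ≥ 𝓛^L`. -/
theorem iwelbo_mixture_monotone
    {α : Type*} [MeasurableSpace α] (μ : Measure α) [SigmaFinite μ]
    (S : ℕ) (hS : 0 < S) (q : Fin S → α → ℝ) (p : α → ℝ)
    (hq_meas : ∀ s, Measurable (q s))
    (hq_nonneg : ∀ s z, 0 ≤ q s z)
    (hq_prob : ∀ s, ∫ z, q s z ∂μ = 1)
    (hp_meas : Measurable p) (hp_nonneg : ∀ z, 0 ≤ p z)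
    -- the support of the mixture is contained in the support of the posterior
    (h_supp : ∀ z, p z = 0 → (1 / (S : ℝ)) * ∑ j, q j z = 0)
    (h_int : ∀ L : ℕ, Integrable
      (fun zs : Fin L → α =>
        (∏ ℓ, ((1 / (S : ℝ)) * ∑ j, q j (zs ℓ))) *
          Real.log ((1 / (L : ℝ)) * ∑ ℓ, p (zs ℓ) / ((1 / (S : ℝ)) * ∑ j, q j (zs ℓ))))
      (Measure.pi fun _ : Fin L => μ)) :
    ∀ L : ℕ, 1 ≤ L →
      iwelbo μ (fun z => (1 / (S : ℝ)) * ∑ j, q j z) p L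
        ≤ iwelbo μ (fun z => (1 / (S : ℝ)) * ∑ j, q j z) p (L + 1) :=
  iwelbo_mixture_monotone_general μ S hS q p hq_nonneg hq_prob hp_nonneg h_supp h_int
end
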